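/- Let n, n1 ≥ 1, m1, m2 ≥ 0, r ≥ 0, let d0 ∈ U(n; 2^{m1} 3^{m2}), d1 ∈ U(n1; 2^{m1} 3^{m2}), let d2 be a column-balanced n1×r matrix with entries in {1,2}, and let D3 be the corresponding column augmented design with coincidence numbers F, V, T. Then: (1) the sum of F_{ij} over all ordered pairs of distinct initial rows equals m1·n(n−2)/2; (2) the sum of F_{ij} over all ordered pairs of distinct follow-up rows equals m1·n1(n1−2)/2; (3) the sum of F_{ij} over all pairs (i,j) with i an initial row and j a follow-up row equals m1·n·n1/2; (4) the sum of V_{ij} over all ordered pairs of distinct initial rows equals m2·n(n−3)/3; (5) the sum of V_{ij} over all ordered pairs of distinct follow-up rows equals m2·n1(n1−3)/3; (6) the sum of V_{ij} over all pairs (i,j) with i an initial row and j a follow-up row equals m2·n·n1/3; (7) the sum of T_{ij} over all ordered pairs of distinct follow-up rows equals r·n1(n1−2)/2. -/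

import Mathlib

open Finset

noncomputable section

namespace CAUD

/-- The mapped point value `u = (2x+1)/(2q)`. -/
def uVal (q x : ℕ) : ℝ := (2 * (x : ℝ) + 1) / (2 * (q : ℝ))

/-- The squared wrap-around L2-discrepancy of an `N × M` design whose `k`-th
column takes values in `{0, …, q k - 1}`. -/
def WD {N M : ℕ} (q : Fin M → ℕ) (x : Fin N → Fin M → ℕ) : ℝ :=
  -((4 : ℝ) / 3) ^ M + (1 / (N : ℝ) ^ 2) *
    ∑ i : Fin N, ∑ j : Fin N, ∏ k : Fin M,
      ((3 : ℝ) / 2 - |uVal (q k) (x i k) - uVal (q k) (x j k)| *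
        (1 - |uVal (q k) (x i k) - uVal (q k) (x j k)|))

/-- A mixed-level U-type design in `U(N; 2^{m1} 3^{m2})`: the first `m1` columns are
two-level and balanced, the last `m2` columns are three-level and balanced. -/
def IsUType (N m1 m2 : ℕ) (d : Fin N → Fin (m1 + m2) → ℕ) : Prop :=
  ∀ k : Fin (m1 + m2),
    if (k : ℕ) < m1 then
      (∀ i, d i k < 2) ∧ ∀ v < 2, 2 * (univ.filter (fun i => d i k = v)).card = N
    else
      (∀ i, d i k < 3) ∧ ∀ v < 3, 3 * (univ.filter (fun i => d i k = v)).card = N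

/-- A column-balanced `n1 × r` matrix with entries in `{1, 2}`: every column has
exactly `n1/2` entries equal to 1 and `n1/2` entries equal to 2. -/
def IsBalanced (n1 r : ℕ) (d2 : Fin n1 → Fin r → ℕ) : Prop :=
  (∀ i k, d2 i k = 1 ∨ d2 i k = 2) ∧
  ∀ k, 2 * (univ.filter (fun i => d2 i k = 1)).card = n1 ∧
       2 * (univ.filter (fun i => d2 i k = 2)).card = n1

/-- The column augmented design: first `n` rows are `(d0, 0)`, last `n1` rows `(d1, d2)`. -/
def augDesign (n n1 m r : ℕ) (d0 : Fin n → Fin m → ℕ) (d1 : Fin n1 → Fin m → ℕ)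
    (d2 : Fin n1 → Fin r → ℕ) : Fin (n + n1) → Fin (m + r) → ℕ := fun i k =>
  if hi : (i : ℕ) < n then
    if hk : (k : ℕ) < m then d0 ⟨i, hi⟩ ⟨k, hk⟩ else 0
  else
    if hk : (k : ℕ) < m then d1 ⟨(i : ℕ) - n, by have := i.isLt; omega⟩ ⟨k, hk⟩
    else d2 ⟨(i : ℕ) - n, by have := i.isLt; omega⟩ ⟨(k : ℕ) - m, by have := k.isLt; omega⟩

/-- Append one blocking column: 0 on the initial rows, 1 on the follow-up rows. -/
def appendOne (n n1 M : ℕ) (D : Fin (n + n1) → Fin M → ℕ) :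
    Fin (n + n1) → Fin (M + 1) → ℕ := fun i k =>
  if hk : (k : ℕ) < M then D i ⟨k, hk⟩ else if (i : ℕ) < n then 0 else 1

/-- Append two blocking columns: the first is 0 on the initial rows and 1 on the
follow-up rows; the second is 0 on the initial rows and the first `n1/2` follow-up
rows, and 1 on the remaining follow-up rows. -/
def appendTwo (n n1 M : ℕ) (D : Fin (n + n1) → Fin M → ℕ) :
    Fin (n + n1) → Fin (M + 2) → ℕ := fun i k =>
  if hk : (k : ℕ) < M then D i ⟨k, hk⟩
  else if (k : ℕ) = M then (if (i : ℕ) < n then 0 else 1)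
  else (if (i : ℕ) < n + n1 / 2 then 0 else 1)

/-- Level sizes of the (possibly blocking-augmented) column augmented design:
first `m1` columns are two-level, the next `m2 + r` are three-level, anything
after that (blocking columns) is two-level. -/
def qfun (m1 m2 r k : ℕ) : ℕ :=
  if k < m1 then 2 else if k < m1 + m2 + r then 3 else 2

/-- Coincidence number among the first `m1` columns. -/
def Fco {N M : ℕ} (m1 : ℕ) (D : Fin N → Fin M → ℕ) (i j : Fin N) : ℕ :=
  (univ.filter (fun k : Fin M => (k : ℕ) < m1 ∧ D i k = D j k)).card

/-- Coincidence number among columns `m1, …, m1 + m2 - 1`. -/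
def Vco {N M : ℕ} (m1 m2 : ℕ) (D : Fin N → Fin M → ℕ) (i j : Fin N) : ℕ :=
  (univ.filter (fun k : Fin M => m1 ≤ (k : ℕ) ∧ (k : ℕ) < m1 + m2 ∧ D i k = D j k)).card

/-- Coincidence number among the columns `≥ m`, counting agreements with common
value in `{1, 2}`. -/
def Tco {N M : ℕ} (m : ℕ) (D : Fin N → Fin M → ℕ) (i j : Fin N) : ℕ :=
  (univ.filter (fun k : Fin M =>
    m ≤ (k : ℕ) ∧ D i k = D j k ∧ (D i k = 1 ∨ D i k = 2))).card

/-- Total coincidence number between two rows. -/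
def lam {N M : ℕ} (D : Fin N → Fin M → ℕ) (i j : Fin N) : ℕ :=
  (univ.filter (fun k : Fin M => D i k = D j k)).card

/-- Number of rows whose `k`-th entry is `u` and whose `l`-th entry is `v`. -/
def nuv {N M : ℕ} (d : Fin N → Fin M → ℕ) (k l : Fin M) (u v : ℕ) : ℕ :=
  (univ.filter (fun i : Fin N => d i k = u ∧ d i l = v)).card

/-- Non-orthogonality of a pair of columns. -/
def fNOD {N M : ℕ} (q : Fin M → ℕ) (d : Fin N → Fin M → ℕ) (k l : Fin M) : ℝ :=
  ∑ u ∈ Finset.range (q k), ∑ v ∈ Finset.range (q l),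
    ((nuv d k l u v : ℝ) - (N : ℝ) / ((q k : ℝ) * (q l : ℝ))) ^ 2

/-- The `E(f_NOD)` criterion: average non-orthogonality over all pairs of columns. -/
def EfNOD {N M : ℕ} (q : Fin M → ℕ) (d : Fin N → Fin M → ℕ) : ℝ :=
  (∑ k : Fin M, ∑ l : Fin M, if (k : ℕ) < (l : ℕ) then fNOD q d k l else 0) /
    (Nat.choose M 2 : ℝ)

/-- Stacking the stage designs `d 0, …, d (l-1)` on top of one another. -/
def stack (M : ℕ) (ns : ℕ → ℕ) (d : (j : ℕ) → Fin (ns j) → Fin M → ℕ) :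
    (l : ℕ) → Fin (∑ j ∈ Finset.range l, ns j) → Fin M → ℕ
  | 0 => fun _ _ => 0
  | l + 1 => fun i =>
    let i' : Fin ((∑ j ∈ Finset.range l, ns j) + ns l) :=
      Fin.cast (Finset.sum_range_succ ns l) i
    if h : (i' : ℕ) < ∑ j ∈ Finset.range l, ns j then
      stack M ns d l ⟨(i' : ℕ), h⟩
    else d l ⟨(i' : ℕ) - ∑ j ∈ Finset.range l, ns j, by have := i'.isLt; omega⟩

def aa : ℝ := Real.log (6 / 5)

def bb : ℝ := Real.log (27 / 23)

/-- The constant `C(s)`. -/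
def Cconst (n n1 m s : ℕ) : ℝ :=
  -(((4 : ℝ) / 3) ^ s - ((n : ℝ) ^ 2 / ((n : ℝ) + n1) ^ 2) * ((3 : ℝ) / 2) ^ s) * ((4 : ℝ) / 3) ^ m
  + ((n1 : ℝ) / ((n : ℝ) + n1) ^ 2) * ((3 : ℝ) / 2) ^ (m + s)

def phi1 (n1 m1 m2 r : ℕ) : ℝ :=
  aa * m1 * ((n1 : ℝ) - 2) / (2 * ((n1 : ℝ) - 1)) + bb * m2 * ((n1 : ℝ) - 3) / (3 * ((n1 : ℝ) - 1))
  + bb * r * ((n1 : ℝ) - 2) / (2 * ((n1 : ℝ) - 1))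

def phi2 (m1 m2 : ℕ) : ℝ := aa * m1 / 2 + bb * m2 / 3

def T1c (n1 m1 m2 r : ℕ) : ℝ := (n1 : ℝ) * ((n1 : ℝ) - 1) * Real.exp (phi1 n1 m1 m2 r)

def T2c (n n1 m1 m2 : ℕ) : ℝ := (n : ℝ) * (n1 : ℝ) * Real.exp (phi2 m1 m2)

/-- Lower bound `LBW3` (mixed-level case, Theorem 1). -/
def LBW3 (n n1 m1 m2 r : ℕ) (wd0 : ℝ) : ℝ :=
  Cconst n n1 (m1 + m2) r + ((n : ℝ) ^ 2 / ((n : ℝ) + n1) ^ 2) * ((3 : ℝ) / 2) ^ r * wd0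
  + (1 / ((n : ℝ) + n1) ^ 2) * ((5 : ℝ) / 4) ^ m1 * ((23 : ℝ) / 18) ^ (m2 + r) *
      (T1c n1 m1 m2 r + 2 * T2c n n1 m1 m2)

def phi1p (n1 m r : ℕ) : ℝ :=
  aa * m * ((n1 : ℝ) - 2) / (2 * ((n1 : ℝ) - 1)) + bb * r * ((n1 : ℝ) - 2) / (2 * ((n1 : ℝ) - 1))

def T1pc (n1 m r : ℕ) : ℝ := (n1 : ℝ) * ((n1 : ℝ) - 1) * Real.exp (phi1p n1 m r)

def w1 (m : ℕ) : ℕ := m / 2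

def q1c (n n1 m : ℕ) : ℝ := (m : ℝ) * n * n1 / 2 - (n : ℝ) * n1 * (w1 m : ℝ)

def p1c (n n1 m : ℕ) : ℝ := (n : ℝ) * n1 - q1c n n1 m

/-- Lower bound `LBW3` for a two-level initial design (Theorem 2). -/
def LBW32 (n n1 m r : ℕ) (wd0 : ℝ) : ℝ :=
  Cconst n n1 m r + ((n : ℝ) ^ 2 / ((n : ℝ) + n1) ^ 2) * ((3 : ℝ) / 2) ^ r * wd0
  + (1 / ((n : ℝ) + n1) ^ 2) * ((5 : ℝ) / 4) ^ m * ((23 : ℝ) / 18) ^ r *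
      (T1pc n1 m r + 2 * (p1c n n1 m * ((6 : ℝ) / 5) ^ w1 m + q1c n n1 m * ((6 : ℝ) / 5) ^ (w1 m + 1)))

def w2 (n1 m r : ℕ) : ℤ :=
  ⌊(m : ℝ) * ((n1 : ℝ) - 3) / (3 * ((n1 : ℝ) - 1)) + (r : ℝ) * ((n1 : ℝ) - 2) / (2 * ((n1 : ℝ) - 1))⌋

def q2c (n1 m r : ℕ) : ℝ :=
  (m : ℝ) * n1 * ((n1 : ℝ) - 3) / 3 + (r : ℝ) * n1 * ((n1 : ℝ) - 2) / 2
  - (n1 : ℝ) * ((n1 : ℝ) - 1) * (w2 n1 m r : ℝ)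

def p2c (n1 m r : ℕ) : ℝ := (n1 : ℝ) * ((n1 : ℝ) - 1) - q2c n1 m r

def w3 (m : ℕ) : ℕ := m / 3

def q3c (n n1 m : ℕ) : ℝ := (m : ℝ) * n * n1 / 3 - (n : ℝ) * n1 * (w3 m : ℝ)

def p3c (n n1 m : ℕ) : ℝ := (n : ℝ) * n1 - q3c n n1 m

/-- Lower bound `LBW3` for a three-level initial design (Theorem 3). -/
def LBW33 (n n1 m r : ℕ) (wd0 : ℝ) : ℝ :=
  Cconst n n1 m r + ((n : ℝ) ^ 2 / ((n : ℝ) + n1) ^ 2) * ((3 : ℝ) / 2) ^ r * wd0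
  + (1 / ((n : ℝ) + n1) ^ 2) * ((23 : ℝ) / 18) ^ (m + r) *
      (p2c n1 m r * ((27 : ℝ) / 23) ^ w2 n1 m r + q2c n1 m r * ((27 : ℝ) / 23) ^ (w2 n1 m r + 1)
       + 2 * (p3c n n1 m * ((27 : ℝ) / 23) ^ w3 m + q3c n n1 m * ((27 : ℝ) / 23) ^ (w3 m + 1)))

/-- Lower bound of Theorem 4 for a mixed-level initial design. -/
def LBW3b1 (n n1 m1 m2 r : ℕ) (wd0 : ℝ) : ℝ :=
  Cconst n n1 (m1 + m2) (r + 1) + ((n : ℝ) ^ 2 / ((n : ℝ) + n1) ^ 2) * ((3 : ℝ) / 2) ^ (r + 1) * wd0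
  + (1 / ((n : ℝ) + n1) ^ 2) * ((5 : ℝ) / 4) ^ m1 * ((23 : ℝ) / 18) ^ (m2 + r) *
      ((3 : ℝ) / 2 * T1c n1 m1 m2 r + 2 * ((5 : ℝ) / 4) * T2c n n1 m1 m2)

/-- Lower bound of Theorem 4 for a two-level initial design. -/
def LBW3b2 (n n1 m r : ℕ) (wd0 : ℝ) : ℝ :=
  Cconst n n1 m (r + 1) + ((n : ℝ) ^ 2 / ((n : ℝ) + n1) ^ 2) * ((3 : ℝ) / 2) ^ (r + 1) * wd0
  + (1 / ((n : ℝ) + n1) ^ 2) * ((5 : ℝ) / 4) ^ m * ((23 : ℝ) / 18) ^ r *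
      ((3 : ℝ) / 2 * T1pc n1 m r +
        2 * ((5 : ℝ) / 4) * (p1c n n1 m * ((6 : ℝ) / 5) ^ w1 m + q1c n n1 m * ((6 : ℝ) / 5) ^ (w1 m + 1)))

/-- Lower bound of Theorem 4 for a three-level initial design. -/
def LBW3b3 (n n1 m r : ℕ) (wd0 : ℝ) : ℝ :=
  Cconst n n1 m (r + 1) + ((n : ℝ) ^ 2 / ((n : ℝ) + n1) ^ 2) * ((3 : ℝ) / 2) ^ (r + 1) * wd0
  + (1 / ((n : ℝ) + n1) ^ 2) * ((23 : ℝ) / 18) ^ (m + r) *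
      ((3 : ℝ) / 2 * (p2c n1 m r * ((27 : ℝ) / 23) ^ w2 n1 m r
                      + q2c n1 m r * ((27 : ℝ) / 23) ^ (w2 n1 m r + 1))
       + 2 * ((5 : ℝ) / 4) * (p3c n n1 m * ((27 : ℝ) / 23) ^ w3 m
                              + q3c n n1 m * ((27 : ℝ) / 23) ^ (w3 m + 1)))

def phi1B (n1 m1 m2 r : ℕ) : ℝ :=
  aa * ((m1 : ℝ) + 1) * ((n1 : ℝ) - 2) / (2 * ((n1 : ℝ) - 1))
  + bb * m2 * ((n1 : ℝ) - 3) / (3 * ((n1 : ℝ) - 1))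
  + bb * r * ((n1 : ℝ) - 2) / (2 * ((n1 : ℝ) - 1))

def phi2B (m1 m2 : ℕ) : ℝ := aa * ((m1 : ℝ) + 1) / 2 + bb * m2 / 3

def T1Bc (n1 m1 m2 r : ℕ) : ℝ := (n1 : ℝ) * ((n1 : ℝ) - 1) * Real.exp (phi1B n1 m1 m2 r)

def T2Bc (n n1 m1 m2 : ℕ) : ℝ := (n : ℝ) * (n1 : ℝ) * Real.exp (phi2B m1 m2)

/-- Lower bound `LBW3B` (Theorem 5). -/
def LBW3B (n n1 m1 m2 r : ℕ) (wd0 : ℝ) : ℝ :=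
  Cconst n n1 (m1 + m2) (r + 2) + ((n : ℝ) ^ 2 / ((n : ℝ) + n1) ^ 2) * ((3 : ℝ) / 2) ^ (r + 2) * wd0
  + (1 / ((n : ℝ) + n1) ^ 2) * ((5 : ℝ) / 4) ^ (m1 + 1) * ((23 : ℝ) / 18) ^ (m2 + r) *
      ((3 : ℝ) / 2 * T1Bc n1 m1 m2 r + 2 * ((5 : ℝ) / 4) * T2Bc n n1 m1 m2)

def psi1 (n1 m1 m2 r : ℕ) : ℤ :=
  ⌊((m1 : ℝ) * ((n1 : ℝ) - 2) / 2 + (m2 : ℝ) * ((n1 : ℝ) - 3) / 3 + (r : ℝ) * ((n1 : ℝ) - 2) / 2) /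
      ((n1 : ℝ) - 1)⌋

def eta1 (n1 m1 m2 r : ℕ) : ℝ :=
  (m1 : ℝ) * n1 * ((n1 : ℝ) - 2) / 2 + (m2 : ℝ) * n1 * ((n1 : ℝ) - 3) / 3
  + (r : ℝ) * n1 * ((n1 : ℝ) - 2) / 2 - (n1 : ℝ) * ((n1 : ℝ) - 1) * (psi1 n1 m1 m2 r : ℝ)

def zeta1 (n1 m1 m2 r : ℕ) : ℝ := (n1 : ℝ) * ((n1 : ℝ) - 1) - eta1 n1 m1 m2 r

def psi2 (m1 m2 : ℕ) : ℤ := ⌊(m1 : ℝ) / 2 + (m2 : ℝ) / 3⌋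

def eta2 (n n1 m1 m2 : ℕ) : ℝ :=
  (m1 : ℝ) * n * n1 / 2 + (m2 : ℝ) * n * n1 / 3 - (n : ℝ) * n1 * (psi2 m1 m2 : ℝ)

def zeta2 (n n1 m1 m2 : ℕ) : ℝ := (n : ℝ) * n1 - eta2 n n1 m1 m2

def Q1c (n1 m1 m2 r : ℕ) : ℝ :=
  zeta1 n1 m1 m2 r * (psi1 n1 m1 m2 r : ℝ) ^ 2 + eta1 n1 m1 m2 r * ((psi1 n1 m1 m2 r : ℝ) + 1) ^ 2

def Q1pc (n1 m1 m2 r : ℕ) : ℝ :=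
  zeta1 n1 m1 m2 r * ((psi1 n1 m1 m2 r : ℝ) + 1) ^ 2 + eta1 n1 m1 m2 r * ((psi1 n1 m1 m2 r : ℝ) + 2) ^ 2

def Q2c (n n1 m1 m2 : ℕ) : ℝ :=
  zeta2 n n1 m1 m2 * (psi2 m1 m2 : ℝ) ^ 2 + eta2 n n1 m1 m2 * ((psi2 m1 m2 : ℝ) + 1) ^ 2

/-- Lower bound `LBf3` for `E(f_NOD)` of the column augmented design. -/
def LBf3 (n n1 m1 m2 r : ℕ) (ef0 : ℝ) : ℝ :=
  ((m1 : ℝ) + m2) * ((m1 : ℝ) + m2 - 1) / (((m1 : ℝ) + m2 + r) * ((m1 : ℝ) + m2 + r - 1)) * ef0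
  + 1 / (((m1 : ℝ) + m2 + r) * ((m1 : ℝ) + m2 + r - 1)) * (Q1c n1 m1 m2 r + 2 * Q2c n n1 m1 m2)
  + ((n : ℝ) + n1) * ((m1 : ℝ) + m2 + r) / ((m1 : ℝ) + m2 + r - 1)
  - 1 / (((m1 : ℝ) + m2 + r) * ((m1 : ℝ) + m2 + r - 1)) *
    ((n : ℝ) * ((m1 : ℝ) + m2) ^ 2
      - (n : ℝ) ^ 2 * (((m1 : ℝ) + (m1 : ℝ) ^ 2) / 4 + (2 * (m2 : ℝ) + (m2 : ℝ) ^ 2) / 9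
          + (m1 : ℝ) * m2 / 3)
      - (r : ℝ) * m1 * n * ((n : ℝ) - 2)
      - 2 * (r : ℝ) * m2 * n * ((n : ℝ) - 3) / 3
      - (n : ℝ) * ((n : ℝ) - 1) * (r : ℝ) ^ 2
      + (r : ℝ) * ((n : ℝ) ^ 2 + (n1 : ℝ) ^ 2 / 2)
      + ((m1 : ℝ) / 2 + (m2 : ℝ) / 3 + (m1 : ℝ) * ((m1 : ℝ) - 1) / 4
          + ((m2 : ℝ) + r) * ((m2 : ℝ) + r - 1) / 9 + (m1 : ℝ) * ((m2 : ℝ) + r) / 3)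
        * ((n : ℝ) + n1) ^ 2)

/-- Lower bound `LBf3b` for `E(f_NOD)` of the design with one added blocking column. -/
def LBf3b (n n1 m1 m2 r : ℕ) (ef0 : ℝ) : ℝ :=
  ((m1 : ℝ) + m2) * ((m1 : ℝ) + m2 - 1) / (((m1 : ℝ) + m2 + r + 1) * ((m1 : ℝ) + m2 + r)) * ef0
  + 1 / (((m1 : ℝ) + m2 + r + 1) * ((m1 : ℝ) + m2 + r)) * (Q1pc n1 m1 m2 r + 2 * Q2c n n1 m1 m2)
  + ((n : ℝ) + n1) * ((m1 : ℝ) + m2 + r + 1) / ((m1 : ℝ) + m2 + r)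
  - 1 / (((m1 : ℝ) + m2 + r + 1) * ((m1 : ℝ) + m2 + r)) *
    ((n : ℝ) * ((m1 : ℝ) + m2) ^ 2
      - (n : ℝ) ^ 2 * (((m1 : ℝ) + (m1 : ℝ) ^ 2) / 4 + (2 * (m2 : ℝ) + (m2 : ℝ) ^ 2) / 9
          + (m1 : ℝ) * m2 / 3)
      - ((r : ℝ) + 1) * m1 * n * ((n : ℝ) - 2)
      - 2 * ((r : ℝ) + 1) * m2 * n * ((n : ℝ) - 3) / 3
      - (n : ℝ) * ((n : ℝ) - 1) * ((r : ℝ) + 1) ^ 2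
      + (r : ℝ) * ((n : ℝ) ^ 2 + (n1 : ℝ) ^ 2 / 2) + (n : ℝ) ^ 2 + (n1 : ℝ) ^ 2
      + ((m1 : ℝ) / 2 + (m2 : ℝ) / 3 + (m1 : ℝ) * ((m1 : ℝ) + 1) / 4
          + ((m2 : ℝ) + r) * ((m2 : ℝ) + r - 1) / 9 + ((m1 : ℝ) + 1) * ((m2 : ℝ) + r) / 3)
        * ((n : ℝ) + n1) ^ 2)

/-- Lower bound `LBf3B` for `E(f_NOD)` of the design with two added blocking columns. -/
def LBf3B (n n1 m1 m2 r : ℕ) (ef0 : ℝ) : ℝ :=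
  ((m1 : ℝ) + m2) * ((m1 : ℝ) + m2 - 1) / (((m1 : ℝ) + m2 + r + 2) * ((m1 : ℝ) + m2 + r + 1)) * ef0
  + 1 / (((m1 : ℝ) + m2 + r + 2) * ((m1 : ℝ) + m2 + r + 1)) *
      (Q1pc n1 (m1 + 1) m2 r + 2 * Q2c n n1 (m1 + 1) m2)
  + ((n : ℝ) + n1) * ((m1 : ℝ) + m2 + r + 2) / ((m1 : ℝ) + m2 + r + 1)
  - 1 / (((m1 : ℝ) + m2 + r + 2) * ((m1 : ℝ) + m2 + r + 1)) *
    ((n : ℝ) * ((m1 : ℝ) + m2) ^ 2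
      - (n : ℝ) ^ 2 * (((m1 : ℝ) + (m1 : ℝ) ^ 2) / 4 + (2 * (m2 : ℝ) + (m2 : ℝ) ^ 2) / 9
          + (m1 : ℝ) * m2 / 3)
      - ((r : ℝ) + 2) * m1 * n * ((n : ℝ) - 2)
      - 2 * ((r : ℝ) + 2) * m2 * n * ((n : ℝ) - 3) / 3
      - (n : ℝ) * ((n : ℝ) - 1) * ((r : ℝ) + 2) ^ 2
      + ((r : ℝ) + 2) * (n : ℝ) ^ 2 + (3 + (r : ℝ)) * (n1 : ℝ) ^ 2 / 2 + (n : ℝ) * n1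
      + ((m1 : ℝ) / 2 + (m2 : ℝ) / 3 + ((m1 : ℝ) + 2) * ((m1 : ℝ) + 1) / 4
          + ((m2 : ℝ) + r) * ((m2 : ℝ) + r - 1) / 9 + ((m1 : ℝ) + 2) * ((m2 : ℝ) + r) / 3)
        * ((n : ℝ) + n1) ^ 2)

/-!
Exchange the order of summation: summing a coincidence number over pairs of rows is summing, over
the columns concerned, the number of pairs of rows that agree in that column. In a column in which
each of `q` levels occurs `N/q` times, every entry agrees with exactly `N/q` entries of the column
(itself included), so a column contributes `N·N'/q` agreeing pairs between two such designs and
`N(N/q - 1)` ordered pairs of distinct rows within one. The entries of `d2` all lie in `{1, 2}`,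
so `T` is the ordinary coincidence number of `d2`.
-/

def IsBalancedColumn {ι : Type*} [Fintype ι] (V : Finset ℕ) (q : ℕ) (c : ι → ℕ) : Prop :=
  (∀ i, c i ∈ V) ∧ ∀ v ∈ V, q * #{i | c i = v} = Fintype.card ι

section Counting

variable {ι κ σ : Type*} [Fintype ι] [Fintype κ] [Fintype σ] {V : Finset ℕ} {q : ℕ}

theorem mul_sum_card_coincide {c0 : ι → ℕ} {c1 : κ → ℕ} (hc0 : ∀ i, c0 i ∈ V)
    (hc1 : IsBalancedColumn V q c1) :
    q * ∑ i, #{j | c0 i = c1 j} = Fintype.card ι * Fintype.card κ := by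
  have hrow (i : ι) : q * #{j | c0 i = c1 j} = Fintype.card κ := by
    simpa only [eq_comm] using hc1.2 (c0 i) (hc0 i)
  simp [mul_sum, hrow]

theorem sum_sum_card_filter_comm (P : ι → κ → σ → Prop) [∀ i j k, Decidable (P i j k)] :
    ∑ i, ∑ j, #{k | P i j k} = ∑ k, ∑ i, #{j | P i j k} := by
  simp only [card_filter]
  exact (sum_congr rfl fun i _ => sum_comm).trans sum_comm

theorem mul_sum_sum_card_coincide {A : ι → σ → ℕ} {B : κ → σ → ℕ} (hA : ∀ i k, A i k ∈ V)
    (hB : ∀ k, IsBalancedColumn V q (B · k)) :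
    q * ∑ i, ∑ j, #{k | A i k = B j k} =
      Fintype.card σ * (Fintype.card ι * Fintype.card κ) := by
  rw [sum_sum_card_filter_comm, mul_sum]
  simp [mul_sum_card_coincide (hA · _) (hB _)]

theorem sum_sum_card_coincide_eq_ite_ne_add [DecidableEq ι] (A : ι → σ → ℕ) :
    ∑ i, ∑ j, #{k | A i k = A j k} =
      ∑ i, ∑ j, (if i ≠ j then #{k | A i k = A j k} else 0) +
        Fintype.card ι * Fintype.card σ := by
  have hsplit (i j : ι) : #{k | A i k = A j k} =
      (if i ≠ j then #{k | A i k = A j k} else 0) + if i = j then Fintype.card σ else 0 := by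
    by_cases h : i = j <;> simp [h]
  rw [sum_congr rfl fun i _ => sum_congr rfl fun j _ => hsplit i j]
  simp [sum_add_distrib]

end Counting

section Designs

variable {N N0 N1 m q : ℕ} {V : Finset ℕ}

theorem cast_sum_sum_card_coincide {A : Fin N0 → Fin m → ℕ} {B : Fin N1 → Fin m → ℕ}
    (hq : q ≠ 0) (hA : ∀ i k, A i k ∈ V) (hB : ∀ k, IsBalancedColumn V q (B · k)) :
    ((∑ i, ∑ j, #{k | A i k = B j k} : ℕ) : ℝ) = m * N0 * N1 / q := by
  have h := mul_sum_sum_card_coincide hA hB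
  simp only [Fintype.card_fin] at h
  rw [eq_div_iff (by exact_mod_cast hq), mul_comm, mul_assoc]
  exact_mod_cast h

theorem cast_sum_sum_ite_ne_card_coincide {A : Fin N → Fin m → ℕ} (hq : q ≠ 0)
    (hA : ∀ k, IsBalancedColumn V q (A · k)) :
    ((∑ i, ∑ j, if i ≠ j then #{k | A i k = A j k} else 0 : ℕ) : ℝ) =
      m * N * (N - q) / q := by
  have h := cast_sum_sum_card_coincide hq (fun i k => (hA k).1 i) hA
  rw [sum_sum_card_coincide_eq_ite_ne_add, Fintype.card_fin, Fintype.card_fin] at h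
  have hq' : (q : ℝ) ≠ 0 := by exact_mod_cast hq
  rw [Nat.cast_add, Nat.cast_mul, eq_div_iff hq'] at h
  rw [eq_div_iff hq']
  linear_combination h

end Designs

theorem IsUType.isBalancedColumn_castAdd {N m1 m2 : ℕ} {d : Fin N → Fin (m1 + m2) → ℕ}
    (h : IsUType N m1 m2 d) (k : Fin m1) :
    IsBalancedColumn (range 2) 2 (d · (Fin.castAdd m2 k)) := by
  have hk := h (Fin.castAdd m2 k)
  rw [if_pos (by simp)] at hk
  exact ⟨fun i => mem_range.2 (hk.1 i), fun v hv => by simpa using hk.2 v (mem_range.1 hv)⟩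

theorem IsUType.isBalancedColumn_natAdd {N m1 m2 : ℕ} {d : Fin N → Fin (m1 + m2) → ℕ}
    (h : IsUType N m1 m2 d) (k : Fin m2) :
    IsBalancedColumn (range 3) 3 (d · (Fin.natAdd m1 k)) := by
  have hk := h (Fin.natAdd m1 k)
  rw [if_neg (by simp)] at hk
  exact ⟨fun i => mem_range.2 (hk.1 i), fun v hv => by simpa using hk.2 v (mem_range.1 hv)⟩

theorem IsBalanced.isBalancedColumn {n1 r : ℕ} {d2 : Fin n1 → Fin r → ℕ}
    (h : IsBalanced n1 r d2) (k : Fin r) : IsBalancedColumn {1, 2} 2 (d2 · k) := by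
  refine ⟨fun i => by rcases h.1 i k with hi | hi <;> simp [hi], fun v hv => ?_⟩
  rcases mem_insert.1 hv with rfl | hv
  · simpa using (h.2 k).1
  · rw [mem_singleton.1 hv]
    simpa using (h.2 k).2

section RowBlocks

variable {M : Type*} [AddCommMonoid M] {n n1 : ℕ}

theorem sum_sum_ite_lt_lt_ne (f : Fin (n + n1) → Fin (n + n1) → M) :
    (∑ i : Fin (n + n1), ∑ j : Fin (n + n1),
        if (i : ℕ) < n ∧ (j : ℕ) < n ∧ i ≠ j then f i j else 0) =
      ∑ i : Fin n, ∑ j : Fin n, if i ≠ j then f (Fin.castAdd n1 i) (Fin.castAdd n1 j) else 0 := by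
  simp [Fin.sum_univ_add, Fin.castAdd_inj]

theorem sum_sum_ite_le_le_ne (f : Fin (n + n1) → Fin (n + n1) → M) :
    (∑ i : Fin (n + n1), ∑ j : Fin (n + n1),
        if n ≤ (i : ℕ) ∧ n ≤ (j : ℕ) ∧ i ≠ j then f i j else 0) =
      ∑ i : Fin n1, ∑ j : Fin n1, if i ≠ j then f (Fin.natAdd n i) (Fin.natAdd n j) else 0 := by
  have hlt (x : Fin n) : ¬n ≤ (x : ℕ) := not_le.2 x.isLt
  simp [Fin.sum_univ_add, Fin.ext_iff, hlt]

theorem sum_sum_ite_lt_le (f : Fin (n + n1) → Fin (n + n1) → M) :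
    (∑ i : Fin (n + n1), ∑ j : Fin (n + n1), if (i : ℕ) < n ∧ n ≤ (j : ℕ) then f i j else 0) =
      ∑ i : Fin n, ∑ j : Fin n1, f (Fin.castAdd n1 i) (Fin.natAdd n j) := by
  have hlt (x : Fin n) : ¬n ≤ (x : ℕ) := not_le.2 x.isLt
  simp [Fin.sum_univ_add, hlt]

end RowBlocks

section ColumnBlocks

variable {N m1 m2 r : ℕ} (D : Fin N → Fin (m1 + m2 + r) → ℕ) (i j : Fin N)

theorem fco_eq_card : Fco m1 D i j =
    #{k : Fin m1 |
      D i (Fin.castAdd r (Fin.castAdd m2 k)) = D j (Fin.castAdd r (Fin.castAdd m2 k))} := by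
  have hge (x : Fin r) : ¬m1 + m2 + (x : ℕ) < m1 := by omega
  simp only [Fco, card_filter, Fin.sum_univ_add]
  simp [hge]

theorem vco_eq_card : Vco m1 m2 D i j =
    #{k : Fin m2 |
      D i (Fin.castAdd r (Fin.natAdd m1 k)) = D j (Fin.castAdd r (Fin.natAdd m1 k))} := by
  simp only [Vco, card_filter, Fin.sum_univ_add]
  simp

theorem tco_eq_card : Tco (m1 + m2) D i j =
    #{k : Fin r | D i (Fin.natAdd (m1 + m2) k) = D j (Fin.natAdd (m1 + m2) k) ∧
      (D i (Fin.natAdd (m1 + m2) k) = 1 ∨ D i (Fin.natAdd (m1 + m2) k) = 2)} := by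
  have hlt (x : Fin m1) : ¬m1 + m2 ≤ (x : ℕ) := by omega
  simp only [Tco, card_filter, Fin.sum_univ_add]
  simp [hlt]

end ColumnBlocks

section Augmented

variable {n n1 m r : ℕ} (d0 : Fin n → Fin m → ℕ) (d1 : Fin n1 → Fin m → ℕ)
  (d2 : Fin n1 → Fin r → ℕ)

theorem augDesign_castAdd_castAdd (i : Fin n) (k : Fin m) :
    augDesign n n1 m r d0 d1 d2 (Fin.castAdd n1 i) (Fin.castAdd r k) = d0 i k := by
  simp [augDesign]

theorem augDesign_natAdd_castAdd (i : Fin n1) (k : Fin m) :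
    augDesign n n1 m r d0 d1 d2 (Fin.natAdd n i) (Fin.castAdd r k) = d1 i k := by
  simp [augDesign]

theorem augDesign_natAdd_natAdd (i : Fin n1) (k : Fin r) :
    augDesign n n1 m r d0 d1 d2 (Fin.natAdd n i) (Fin.natAdd m k) = d2 i k := by
  simp [augDesign]

end Augmented

theorem paper_stmt_18_general (n n1 m1 m2 r : ℕ)
    (d0 : Fin n → Fin (m1 + m2) → ℕ) (d1 : Fin n1 → Fin (m1 + m2) → ℕ)
    (d2 : Fin n1 → Fin r → ℕ)
    (hd0 : IsUType n m1 m2 d0) (hd1 : IsUType n1 m1 m2 d1) (hd2 : IsBalanced n1 r d2) :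
    (((∑ i : Fin (n + n1), ∑ j : Fin (n + n1),
        if (i : ℕ) < n ∧ (j : ℕ) < n ∧ i ≠ j then Fco m1 (augDesign n n1 (m1 + m2) r d0 d1 d2) i j else 0 : ℕ) : ℝ)
      = (m1 : ℝ) * n * ((n : ℝ) - 2) / 2) ∧
    (((∑ i : Fin (n + n1), ∑ j : Fin (n + n1),
        if n ≤ (i : ℕ) ∧ n ≤ (j : ℕ) ∧ i ≠ j then Fco m1 (augDesign n n1 (m1 + m2) r d0 d1 d2) i j else 0 : ℕ) : ℝ)
      = (m1 : ℝ) * n1 * ((n1 : ℝ) - 2) / 2) ∧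
    (((∑ i : Fin (n + n1), ∑ j : Fin (n + n1),
        if (i : ℕ) < n ∧ n ≤ (j : ℕ) then Fco m1 (augDesign n n1 (m1 + m2) r d0 d1 d2) i j else 0 : ℕ) : ℝ)
      = (m1 : ℝ) * n * n1 / 2) ∧
    (((∑ i : Fin (n + n1), ∑ j : Fin (n + n1),
        if (i : ℕ) < n ∧ (j : ℕ) < n ∧ i ≠ j then Vco m1 m2 (augDesign n n1 (m1 + m2) r d0 d1 d2) i j else 0 : ℕ) : ℝ)
      = (m2 : ℝ) * n * ((n : ℝ) - 3) / 3) ∧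
    (((∑ i : Fin (n + n1), ∑ j : Fin (n + n1),
        if n ≤ (i : ℕ) ∧ n ≤ (j : ℕ) ∧ i ≠ j then Vco m1 m2 (augDesign n n1 (m1 + m2) r d0 d1 d2) i j else 0 : ℕ) : ℝ)
      = (m2 : ℝ) * n1 * ((n1 : ℝ) - 3) / 3) ∧
    (((∑ i : Fin (n + n1), ∑ j : Fin (n + n1),
        if (i : ℕ) < n ∧ n ≤ (j : ℕ) then Vco m1 m2 (augDesign n n1 (m1 + m2) r d0 d1 d2) i j else 0 : ℕ) : ℝ)
      = (m2 : ℝ) * n * n1 / 3) ∧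
    (((∑ i : Fin (n + n1), ∑ j : Fin (n + n1),
        if n ≤ (i : ℕ) ∧ n ≤ (j : ℕ) ∧ i ≠ j then Tco (m1 + m2) (augDesign n n1 (m1 + m2) r d0 d1 d2) i j else 0 : ℕ) : ℝ)
      = (r : ℝ) * n1 * ((n1 : ℝ) - 2) / 2) := by
  simp only [sum_sum_ite_lt_lt_ne, sum_sum_ite_le_le_ne, sum_sum_ite_lt_le, fco_eq_card,
    vco_eq_card, tco_eq_card, augDesign_castAdd_castAdd, augDesign_natAdd_castAdd,
    augDesign_natAdd_natAdd, hd2.1, and_true]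
  refine ⟨?_, ?_, ?_, ?_, ?_, ?_, ?_⟩
  · exact_mod_cast cast_sum_sum_ite_ne_card_coincide two_ne_zero hd0.isBalancedColumn_castAdd
  · exact_mod_cast cast_sum_sum_ite_ne_card_coincide two_ne_zero hd1.isBalancedColumn_castAdd
  · exact_mod_cast cast_sum_sum_card_coincide two_ne_zero
      (fun i k => (hd0.isBalancedColumn_castAdd k).1 i) hd1.isBalancedColumn_castAdd
  · exact_mod_cast cast_sum_sum_ite_ne_card_coincide three_ne_zero hd0.isBalancedColumn_natAdd
  · exact_mod_cast cast_sum_sum_ite_ne_card_coincide three_ne_zero hd1.isBalancedColumn_natAdd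
  · exact_mod_cast cast_sum_sum_card_coincide three_ne_zero
      (fun i k => (hd0.isBalancedColumn_natAdd k).1 i) hd1.isBalancedColumn_natAdd
  · exact_mod_cast cast_sum_sum_ite_ne_card_coincide two_ne_zero hd2.isBalancedColumn

theorem paper_stmt_18 (n n1 m1 m2 r : ℕ) (hn : 1 ≤ n) (hn1 : 1 ≤ n1)
    (d0 : Fin n → Fin (m1 + m2) → ℕ) (d1 : Fin n1 → Fin (m1 + m2) → ℕ)
    (d2 : Fin n1 → Fin r → ℕ)
    (hd0 : IsUType n m1 m2 d0) (hd1 : IsUType n1 m1 m2 d1) (hd2 : IsBalanced n1 r d2) :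
    (((∑ i : Fin (n + n1), ∑ j : Fin (n + n1),
        if (i : ℕ) < n ∧ (j : ℕ) < n ∧ i ≠ j then Fco m1 (augDesign n n1 (m1 + m2) r d0 d1 d2) i j else 0 : ℕ) : ℝ)
      = (m1 : ℝ) * n * ((n : ℝ) - 2) / 2) ∧
    (((∑ i : Fin (n + n1), ∑ j : Fin (n + n1),
        if n ≤ (i : ℕ) ∧ n ≤ (j : ℕ) ∧ i ≠ j then Fco m1 (augDesign n n1 (m1 + m2) r d0 d1 d2) i j else 0 : ℕ) : ℝ)
      = (m1 : ℝ) * n1 * ((n1 : ℝ) - 2) / 2) ∧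
    (((∑ i : Fin (n + n1), ∑ j : Fin (n + n1),
        if (i : ℕ) < n ∧ n ≤ (j : ℕ) then Fco m1 (augDesign n n1 (m1 + m2) r d0 d1 d2) i j else 0 : ℕ) : ℝ)
      = (m1 : ℝ) * n * n1 / 2) ∧
    (((∑ i : Fin (n + n1), ∑ j : Fin (n + n1),
        if (i : ℕ) < n ∧ (j : ℕ) < n ∧ i ≠ j then Vco m1 m2 (augDesign n n1 (m1 + m2) r d0 d1 d2) i j else 0 : ℕ) : ℝ)
      = (m2 : ℝ) * n * ((n : ℝ) - 3) / 3) ∧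
    (((∑ i : Fin (n + n1), ∑ j : Fin (n + n1),
        if n ≤ (i : ℕ) ∧ n ≤ (j : ℕ) ∧ i ≠ j then Vco m1 m2 (augDesign n n1 (m1 + m2) r d0 d1 d2) i j else 0 : ℕ) : ℝ)
      = (m2 : ℝ) * n1 * ((n1 : ℝ) - 3) / 3) ∧
    (((∑ i : Fin (n + n1), ∑ j : Fin (n + n1),
        if (i : ℕ) < n ∧ n ≤ (j : ℕ) then Vco m1 m2 (augDesign n n1 (m1 + m2) r d0 d1 d2) i j else 0 : ℕ) : ℝ)
      = (m2 : ℝ) * n * n1 / 3) ∧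
    (((∑ i : Fin (n + n1), ∑ j : Fin (n + n1),
        if n ≤ (i : ℕ) ∧ n ≤ (j : ℕ) ∧ i ≠ j then Tco (m1 + m2) (augDesign n n1 (m1 + m2) r d0 d1 d2) i j else 0 : ℕ) : ℝ)
      = (r : ℝ) * n1 * ((n1 : ℝ) - 2) / 2) :=
  paper_stmt_18_general n n1 m1 m2 r d0 d1 d2 hd0 hd1 hd2

end CAUD

end
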